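/- Triangle inequality for the SOS analog of the L_p distortion distance: for finite metric measure spaces 𝕏, 𝕐, ℤ with strictly positive probability weights, every real p ≥ 1, and every positive integer r: Δ_{p,r}(𝕏,ℤ) ≤ Δ_{p,r}(𝕏,𝕐) + Δ_{p,r}(𝕐,ℤ). -/

import Mathlib

/-!
Given feasible moment sequences `z₁` for `(𝕏, 𝕐)` and `z₂` for `(𝕐, ℤ)`, glue them along the
common marginal `β` as one glues transport plans: substitute `πᵢₖ ↦ ∑ⱼ βⱼ⁻¹ πᵢⱼ π'ⱼₖ` and apply
the tensor product functional `L_{z₁} ⊗ L_{z₂}`. This gives a feasible moment sequence for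
`(𝕏, ℤ)`. Each marginal polynomial is mapped to a sum of terms killed by a marginal constraint of
`z₁` or of `z₂`, and `e_I` is mapped to a nonnegative combination of pure tensors of monomials,
whose localizing matrices are Hadamard products of positive semidefinite Gram matrices.

The second moments of the gluing are `β`-weighted averages of products of second moments of `z₁`
and `z₂`, so all three objectives are integrals against one nonnegative weight. The triangle
inequality for `|·|` and Minkowski's inequality then give
`obj(z)^{1/p} ≤ obj(z₁)^{1/p} + obj(z₂)^{1/p}`, and taking infima (the independent coupling shows
that the feasible sets are nonempty) proves the claim.
-/

open MvPolynomial

/-- The Riesz functional associated to a moment sequence `z`. -/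
noncomputable def riesz {σ : Type*} (z : (σ →₀ ℕ) → ℝ) (p : MvPolynomial σ ℝ) : ℝ :=
  ∑ α ∈ p.support, MvPolynomial.coeff α p * z α

/-- The total degree (length) of a multi-index. -/
def mdeg {σ : Type*} (α : σ →₀ ℕ) : ℕ := α.sum fun _ e => e

/-- Positive semidefiniteness of the truncated localizing matrix `M_t(g z)`:
the associated quadratic form is nonnegative on coefficient vectors of
polynomials of degree at most `t`. -/
def locPSD {σ : Type*} (z : (σ →₀ ℕ) → ℝ) (g : MvPolynomial σ ℝ) (t : ℕ) : Prop :=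
  ∀ p : MvPolynomial σ ℝ, p.totalDegree ≤ t → 0 ≤ riesz z (g * p ^ 2)

/-- Vanishing of the truncated localizing matrix `M_t(g z)`: all entries are zero. -/
def locZero {σ : Type*} (z : (σ →₀ ℕ) → ℝ) (g : MvPolynomial σ ℝ) (t : ℕ) : Prop :=
  ∀ α β : σ →₀ ℕ, mdeg α ≤ t → mdeg β ≤ t →
    riesz z (g * monomial α 1 * monomial β 1) = 0

/-- The row-marginal polynomial `r_i(π) = ∑_j π_{ij} - μ_i`. -/
noncomputable def rowPoly (a b : ℕ) (μ : Fin a → ℝ) (i : Fin a) :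
    MvPolynomial (Fin a × Fin b) ℝ :=
  (∑ j, X (i, j)) - C (μ i)

/-- The column-marginal polynomial `c_j(π) = ∑_i π_{ij} - ν_j`. -/
noncomputable def colPoly (a b : ℕ) (ν : Fin b → ℝ) (j : Fin b) :
    MvPolynomial (Fin a × Fin b) ℝ :=
  (∑ i, X (i, j)) - C (ν j)

/-- The monomial `e_I = ∏_{(i,j) ∈ I} π_{ij}`. -/
noncomputable def eI {a b : ℕ} (I : Finset (Fin a × Fin b)) : MvPolynomial (Fin a × Fin b) ℝ :=
  ∏ q ∈ I, X q

/-- A probability vector: nonnegative entries summing to 1. -/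
def IsProbVec {a : ℕ} (μ : Fin a → ℝ) : Prop := (∀ i, 0 ≤ μ i) ∧ ∑ i, μ i = 1

/-- Feasibility for the level-`r` Schmüdgen moment relaxation (S-DGW-r). -/
def SFeas (a b r : ℕ) (μ : Fin a → ℝ) (ν : Fin b → ℝ)
    (z : ((Fin a × Fin b) →₀ ℕ) → ℝ) : Prop :=
  z 0 = 1 ∧
  (∀ I : Finset (Fin a × Fin b), I.card ≤ 2 * r → locPSD z (eI I) (r - (I.card + 1) / 2)) ∧
  (∀ i, locZero z (rowPoly a b μ i) (r - 1)) ∧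
  (∀ j, locZero z (colPoly a b ν j) (r - 1)) ∧
  (∀ i₁ i₂ : Fin a, ∀ j : Fin b, locZero z (rowPoly a b μ i₁ * X (i₂, j)) (r - 1)) ∧
  (∀ j₁ j₂ : Fin b, ∀ i : Fin a, locZero z (colPoly a b ν j₁ * X (i, j₂)) (r - 1))

/-- The objective of the Schmüdgen moment relaxation. -/
noncomputable def objS (a b : ℕ) (L : Fin a → Fin b → Fin a → Fin b → ℝ)
    (z : ((Fin a × Fin b) →₀ ℕ) → ℝ) : ℝ :=
  ∑ i, ∑ j, ∑ k, ∑ l, L i j k l * z (Finsupp.single (i, j) 1 + Finsupp.single (k, l) 1)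

/-- The optimal value of the level-`r` Schmüdgen moment relaxation. -/
noncomputable def valS (a b r : ℕ) (μ : Fin a → ℝ) (ν : Fin b → ℝ)
    (L : Fin a → Fin b → Fin a → Fin b → ℝ) : ℝ :=
  sInf {v : ℝ | ∃ z, SFeas a b r μ ν z ∧ v = objS a b L z}

/-- The distortion cost tensor `L_{ij,kl} = |d_X(x_i,x_k) − d_Y(y_j,y_l)|^p`. -/
noncomputable def distCost (a b : ℕ) (dX : Fin a → Fin a → ℝ) (dY : Fin b → Fin b → ℝ)
    (p : ℝ) : Fin a → Fin b → Fin a → Fin b → ℝ :=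
  fun i j k l => |dX i k - dY j l| ^ p

/-- The SOS analog `Δ_{p,r}` of the `L_p` distortion distance:
the `p`-th root of the value of the level-`r` Schmüdgen moment relaxation with the
distortion cost. -/
noncomputable def deltaPR (a b r : ℕ) (α : Fin a → ℝ) (β : Fin b → ℝ)
    (dX : Fin a → Fin a → ℝ) (dY : Fin b → Fin b → ℝ) (p : ℝ) : ℝ :=
  valS a b r α β (distCost a b dX dY p) ^ (1 / p)

/-- `d` is a metric on `Fin a`. -/
def IsFinMetric {a : ℕ} (d : Fin a → Fin a → ℝ) : Prop :=
  (∀ i, d i i = 0) ∧ (∀ i k, d i k = d k i) ∧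
  (∀ i k l, d i l ≤ d i k + d k l) ∧ (∀ i k, d i k = 0 → i = k)

section RealInequalities

theorem rpow_sum_mul_rpow_le_of_le_add {ι : Type*} (s : Finset ι) {p : ℝ} (hp : 1 ≤ p)
    {w x y v : ι → ℝ} (hw : ∀ i ∈ s, 0 ≤ w i) (hx : ∀ i ∈ s, 0 ≤ x i) (hy : ∀ i ∈ s, 0 ≤ y i)
    (hv : ∀ i ∈ s, 0 ≤ v i) (hvxy : ∀ i ∈ s, v i ≤ x i + y i) :
    (∑ i ∈ s, w i * v i ^ p) ^ (1 / p) ≤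
      (∑ i ∈ s, w i * x i ^ p) ^ (1 / p) + (∑ i ∈ s, w i * y i ^ p) ^ (1 / p) := by
  have hp₀ : 0 < p := by linarith
  have hroot : ∀ i ∈ s, ∀ u, 0 ≤ u → w i * u ^ p = (w i ^ (1 / p) * u) ^ p := fun i hi u hu => by
    rw [Real.mul_rpow (Real.rpow_nonneg (hw i hi) _) hu, ← Real.rpow_mul (hw i hi),
      one_div_mul_cancel hp₀.ne', Real.rpow_one]
  calc (∑ i ∈ s, w i * v i ^ p) ^ (1 / p)
      ≤ (∑ i ∈ s, (w i ^ (1 / p) * x i + w i ^ (1 / p) * y i) ^ p) ^ (1 / p) := by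
        refine Real.rpow_le_rpow (Finset.sum_nonneg fun i hi => mul_nonneg (hw i hi)
          (Real.rpow_nonneg (hv i hi) _)) (Finset.sum_le_sum fun i hi => ?_) (by positivity)
        rw [← mul_add, ← hroot i hi _ (add_nonneg (hx i hi) (hy i hi))]
        exact mul_le_mul_of_nonneg_left (Real.rpow_le_rpow (hv i hi) (hvxy i hi) hp₀.le) (hw i hi)
    _ ≤ (∑ i ∈ s, (w i ^ (1 / p) * x i) ^ p) ^ (1 / p) +
          (∑ i ∈ s, (w i ^ (1 / p) * y i) ^ p) ^ (1 / p) :=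
        Real.Lp_add_le_of_nonneg s hp
          (fun i hi => mul_nonneg (Real.rpow_nonneg (hw i hi) _) (hx i hi))
          (fun i hi => mul_nonneg (Real.rpow_nonneg (hw i hi) _) (hy i hi))
    _ = _ := by
        rw [Finset.sum_congr rfl fun i hi => (hroot i hi _ (hx i hi)).symm,
          Finset.sum_congr rfl fun i hi => (hroot i hi _ (hy i hi)).symm]

theorem rpow_sInf_le_add {A B C : Set ℝ} {e : ℝ} (he : 0 < e) (hA : A.Nonempty)
    (hB : B.Nonempty) (hA₀ : ∀ a ∈ A, 0 ≤ a) (hB₀ : ∀ b ∈ B, 0 ≤ b) (hC₀ : ∀ c ∈ C, 0 ≤ c)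
    (h : ∀ a ∈ A, ∀ b ∈ B, ∃ c ∈ C, c ^ e ≤ a ^ e + b ^ e) :
    sInf C ^ e ≤ sInf A ^ e + sInf B ^ e := by
  have hbdd : ∀ S : Set ℝ, (∀ s ∈ S, 0 ≤ s) → BddBelow ((· ^ e) '' S) := fun S hS =>
    ⟨0, by rintro _ ⟨s, hs, rfl⟩; exact Real.rpow_nonneg (hS s hs) e⟩
  have hmap : ∀ S : Set ℝ, S.Nonempty → (∀ s ∈ S, 0 ≤ s) → sInf S ^ e = sInf ((· ^ e) '' S) :=
    fun S hS hS₀ => MonotoneOn.map_csInf_of_continuousWithinAt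
      (Real.continuousAt_rpow_const _ _ (Or.inr he.le)).continuousWithinAt
      (fun x hx y _ hxy => Real.rpow_le_rpow (hS₀ x hx) hxy he.le) hS ⟨0, hS₀⟩
  rw [hmap A hA hA₀, hmap B hB hB₀, ← csInf_add (hA.image _) (hbdd A hA₀) (hB.image _)
    (hbdd B hB₀)]
  refine le_csInf ((hA.image _).add (hB.image _)) ?_
  rintro _ ⟨_, ⟨a, ha, rfl⟩, _, ⟨b, hb, rfl⟩, rfl⟩
  obtain ⟨c, hc, hcab⟩ := h a ha b hb
  exact (Real.rpow_le_rpow (Real.sInf_nonneg hC₀) (csInf_le ⟨0, hC₀⟩ hc) he.le).trans hcab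

end RealInequalities

section Riesz

variable {σ : Type*}

theorem riesz_eq_sum_of_support_subset {z : (σ →₀ ℕ) → ℝ} {p : MvPolynomial σ ℝ}
    {S : Finset (σ →₀ ℕ)} (h : p.support ⊆ S) : riesz z p = ∑ α ∈ S, coeff α p * z α :=
  Finset.sum_subset h fun _ _ hx => by rw [notMem_support_iff.mp hx, zero_mul]

theorem riesz_add (z : (σ →₀ ℕ) → ℝ) (p q : MvPolynomial σ ℝ) :
    riesz z (p + q) = riesz z p + riesz z q := by
  classical
  rw [riesz_eq_sum_of_support_subset support_add,
    riesz_eq_sum_of_support_subset Finset.subset_union_left,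
    riesz_eq_sum_of_support_subset Finset.subset_union_right, ← Finset.sum_add_distrib]
  exact Finset.sum_congr rfl fun _ _ => by rw [coeff_add, add_mul]

theorem riesz_smul (z : (σ →₀ ℕ) → ℝ) (c : ℝ) (p : MvPolynomial σ ℝ) :
    riesz z (c • p) = c • riesz z p := by
  rw [riesz_eq_sum_of_support_subset support_smul, riesz, Finset.smul_sum]
  exact Finset.sum_congr rfl fun _ _ => by rw [coeff_smul, smul_eq_mul, smul_eq_mul, mul_assoc]

noncomputable def rieszLinear (z : (σ →₀ ℕ) → ℝ) : MvPolynomial σ ℝ →ₗ[ℝ] ℝ where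
  toFun := riesz z
  map_add' := riesz_add z
  map_smul' := riesz_smul z

theorem riesz_sum (z : (σ →₀ ℕ) → ℝ) {ι : Type*} (s : Finset ι) (f : ι → MvPolynomial σ ℝ) :
    riesz z (∑ i ∈ s, f i) = ∑ i ∈ s, riesz z (f i) :=
  map_sum (rieszLinear z) f s

theorem riesz_sub (z : (σ →₀ ℕ) → ℝ) (p q : MvPolynomial σ ℝ) :
    riesz z (p - q) = riesz z p - riesz z q :=
  map_sub (rieszLinear z) p q

theorem riesz_C_mul (z : (σ →₀ ℕ) → ℝ) (c : ℝ) (p : MvPolynomial σ ℝ) :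
    riesz z (C c * p) = c * riesz z p := by
  rw [← smul_eq_C_mul, riesz_smul, smul_eq_mul]

theorem riesz_monomial (z : (σ →₀ ℕ) → ℝ) (α : σ →₀ ℕ) (c : ℝ) :
    riesz z (monomial α c) = c * z α := by
  classical
  rw [riesz_eq_sum_of_support_subset support_monomial_subset, Finset.sum_singleton,
    coeff_monomial, if_pos rfl]

theorem riesz_C (z : (σ →₀ ℕ) → ℝ) (c : ℝ) : riesz z (C c) = c * z 0 := by
  rw [← monomial_zero', riesz_monomial]

theorem riesz_X (z : (σ →₀ ℕ) → ℝ) (v : σ) : riesz z (X v) = z (Finsupp.single v 1) := by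
  rw [X, riesz_monomial, one_mul]

theorem X_mul_X_eq_monomial {R : Type*} [CommSemiring R] (u v : σ) :
    (X u * X v : MvPolynomial σ R) = monomial (Finsupp.single u 1 + Finsupp.single v 1) 1 := by
  rw [X, X, monomial_mul, one_mul]

theorem riesz_X_mul_X (z : (σ →₀ ℕ) → ℝ) (u v : σ) :
    riesz z (X u * X v) = z (Finsupp.single u 1 + Finsupp.single v 1) := by
  rw [X_mul_X_eq_monomial, riesz_monomial, one_mul]

theorem riesz_mul_monomial (z : (σ →₀ ℕ) → ℝ) (G : MvPolynomial σ ℝ) (α : σ →₀ ℕ) :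
    riesz z (G * monomial α 1) = ∑ β ∈ G.support, coeff β G * z (β + α) := by
  conv_lhs => rw [as_sum G]
  rw [Finset.sum_mul, riesz_sum]
  exact Finset.sum_congr rfl fun _ _ => by rw [monomial_mul, mul_one, riesz_monomial]

end Riesz

section Degree

variable {σ : Type*}

theorem mdeg_eq_degree (η : σ →₀ ℕ) : mdeg η = η.degree := rfl

theorem totalDegree_monomial_le_mdeg {R : Type*} [CommSemiring R] (η : σ →₀ ℕ) (c : R) :
    (monomial η c).totalDegree ≤ mdeg η :=
  totalDegree_monomial_le η c

theorem exists_le_mdeg_eq {η : σ →₀ ℕ} {k : ℕ} (hk : k ≤ mdeg η) : ∃ η₁ ≤ η, mdeg η₁ = k := by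
  classical
  have hcard : ∀ ζ : σ →₀ ℕ, Multiset.card (Finsupp.toMultiset ζ) = mdeg ζ :=
    Finsupp.card_toMultiset
  refine ⟨Multiset.toFinsupp ((Finsupp.toMultiset η).toList.take k : Multiset σ), ?_, ?_⟩
  · rw [← Finsupp.orderIsoMultiset.le_iff_le]
    simp only [Finsupp.coe_orderIsoMultiset, Multiset.toFinsupp_toMultiset]
    conv_rhs => rw [← Multiset.coe_toList (Finsupp.toMultiset η)]
    exact Multiset.coe_le.mpr (List.take_sublist _ _).subperm
  · rw [← hcard, Multiset.toFinsupp_toMultiset, Multiset.coe_card, List.length_take,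
      Multiset.length_toList, hcard]
    exact min_eq_left hk

theorem exists_add_eq_of_mdeg_le {η : σ →₀ ℕ} {t : ℕ} (h : mdeg η ≤ 2 * t) :
    ∃ η₁ η₂, η₁ + η₂ = η ∧ mdeg η₁ ≤ t ∧ mdeg η₂ ≤ t := by
  obtain ⟨η₁, hle, hdeg⟩ := exists_le_mdeg_eq (min_le_left (mdeg η) t)
  have hsplit : mdeg η = mdeg η₁ + mdeg (η - η₁) := by
    rw [mdeg_eq_degree, mdeg_eq_degree, mdeg_eq_degree, ← map_add, add_tsub_cancel_of_le hle]
  exact ⟨η₁, η - η₁, add_tsub_cancel_of_le hle, by omega, by omega⟩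

theorem mdeg_sum_single_one {ι : Type*} (s : Finset ι) (f : ι → σ) :
    mdeg (∑ x ∈ s, Finsupp.single (f x) 1) = s.card := by
  simp [mdeg_eq_degree, map_sum]

end Degree

section Localizing

variable {σ : Type*} {z : (σ →₀ ℕ) → ℝ} {g : MvPolynomial σ ℝ} {t : ℕ}

theorem locZero.riesz_mul_monomial_eq_zero (h : locZero z g t) {η : σ →₀ ℕ}
    (hη : mdeg η ≤ 2 * t) : riesz z (g * monomial η 1) = 0 := by
  obtain ⟨η₁, η₂, rfl, h₁, h₂⟩ := exists_add_eq_of_mdeg_le hη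
  simpa only [mul_assoc, monomial_mul, one_mul] using h η₁ η₂ h₁ h₂

theorem locZero.riesz_mul_eq_zero (h : locZero z g t) {f : MvPolynomial σ ℝ}
    (hf : f.totalDegree ≤ 2 * t) : riesz z (g * f) = 0 := by
  conv_lhs => rw [as_sum f]
  rw [Finset.mul_sum, riesz_sum]
  refine Finset.sum_eq_zero fun α hα => ?_
  rw [← mul_one (coeff α f), ← C_mul_monomial, mul_left_comm, riesz_C_mul,
    h.riesz_mul_monomial_eq_zero ((le_totalDegree hα).trans hf), mul_zero]

theorem locPSD.posSemidef_gram (h : locPSD z g t) {ι : Type*} (P : ι → MvPolynomial σ ℝ)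
    (hP : ∀ i, (P i).totalDegree ≤ t) :
    (Matrix.of fun i j => riesz z (g * (P i * P j))).PosSemidef := by
  refine ⟨Matrix.IsHermitian.ext fun i j => by simp [mul_comm (P i)], fun x => ?_⟩
  have hquad : (x.sum fun i xi => x.sum fun j xj =>
        star xi * Matrix.of (fun i j => riesz z (g * (P i * P j))) i j * xj) =
      riesz z (g * (x.sum fun i xi => xi • P i) ^ 2) := by
    rw [Finsupp.sum, Finsupp.sum, sq, Finset.sum_mul_sum, Finset.mul_sum, riesz_sum]
    refine Finset.sum_congr rfl fun i _ => ?_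
    rw [Finset.mul_sum, riesz_sum]
    refine Finset.sum_congr rfl fun j _ => ?_
    rw [smul_mul_smul_comm, mul_smul_comm, riesz_smul, smul_eq_mul, star_trivial]
    simp only [Matrix.of_apply]
    ring
  rw [hquad]
  exact h _ (totalDegree_finsetSum_le fun i _ => (totalDegree_smul_le _ _).trans (hP i))

theorem locZero.riesz_eq_zero (h : locZero z g t) : riesz z g = 0 := by
  simpa using h 0 0 (by simp [mdeg]) (by simp [mdeg])

theorem locZero.C_mul (h : locZero z g t) (c : ℝ) : locZero z (C c * g) t := fun α β hα hβ => by
  rw [mul_assoc, mul_assoc, riesz_C_mul, ← mul_assoc, h α β hα hβ, mul_zero]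

end Localizing

section Schmudgen

variable {σ : Type*}

def LocPSDMonomials (z : (σ →₀ ℕ) → ℝ) (r : ℕ) : Prop :=
  ∀ η t, mdeg η + 2 * t ≤ 2 * r → locPSD z (monomial η 1) t

theorem prod_X_support_eq_monomial {ε : σ →₀ ℕ} (hε : ∀ x, ε x ≤ 1) :
    ∏ x ∈ ε.support, (X x : MvPolynomial σ ℝ) = monomial ε 1 := by
  rw [monomial_eq, C_1, one_mul, Finsupp.prod]
  refine Finset.prod_congr rfl fun x hx => ?_
  rw [show ε x = 1 by have := Finsupp.mem_support_iff.mp hx; have := hε x; omega, pow_one]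

theorem card_support_eq_mdeg {ε : σ →₀ ℕ} (hε : ∀ x, ε x ≤ 1) : ε.support.card = mdeg ε := by
  rw [Finset.card_eq_sum_ones, mdeg, Finsupp.sum]
  refine Finset.sum_congr rfl fun x hx => ?_
  have := Finsupp.mem_support_iff.mp hx; have := hε x; omega

/-- Every `π^η f²` is `e_I (π^ρ f)²`, with `I` the set of odd exponents of `η`. -/
theorem locPSDMonomials_of_prod_X {z : (σ →₀ ℕ) → ℝ} {r : ℕ}
    (h : ∀ I : Finset σ, I.card ≤ 2 * r →
      locPSD z (∏ x ∈ I, X x) (r - (I.card + 1) / 2)) :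
    LocPSDMonomials z r := by
  intro η t hdeg f hf
  set ρ : σ →₀ ℕ := η.mapRange (· / 2) (Nat.zero_div 2)
  set ε : σ →₀ ℕ := η.mapRange (· % 2) (Nat.zero_mod 2)
  have hεle : ∀ x, ε x ≤ 1 := fun x => Nat.le_of_lt_succ (Nat.mod_lt _ two_pos)
  have hη : η = ρ + ρ + ε := by
    ext x; simp only [ρ, ε, Finsupp.add_apply, Finsupp.mapRange_apply]; omega
  have hdegη : mdeg η = 2 * mdeg ρ + ε.support.card := by
    rw [card_support_eq_mdeg hεle, hη, mdeg_eq_degree, mdeg_eq_degree, mdeg_eq_degree,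
      map_add, map_add]
    ring
  have hsq : monomial η 1 * f ^ 2 = (∏ x ∈ ε.support, X x) * (monomial ρ 1 * f) ^ 2 := by
    have hmon : monomial (ρ + ρ + ε) (1 : ℝ) = monomial ε 1 * monomial ρ 1 ^ 2 := by
      rw [sq, monomial_mul, monomial_mul, mul_one, mul_one, add_comm]
    rw [prod_X_support_eq_monomial hεle, hη, hmon]
    ring
  rw [hsq]
  refine h _ (by omega) _ ((totalDegree_mul _ _).trans ?_)
  have := totalDegree_monomial_le_mdeg ρ (1 : ℝ)
  omega

theorem LocPSDMonomials.second_moment_nonneg {z : (σ →₀ ℕ) → ℝ} {r : ℕ}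
    (h : LocPSDMonomials z r) (hr : 1 ≤ r) (u v : σ) :
    0 ≤ z (Finsupp.single u 1 + Finsupp.single v 1) := by
  have := h (Finsupp.single u 1 + Finsupp.single v 1) 0 (by
    rw [mdeg_eq_degree, map_add, Finsupp.degree_single, Finsupp.degree_single]; omega) 1
    (by simp)
  rwa [one_pow, mul_one, riesz_monomial, one_mul] at this

end Schmudgen

theorem SFeas.locPSDMonomials {a b r : ℕ} {μ : Fin a → ℝ} {ν : Fin b → ℝ}
    {z : ((Fin a × Fin b) →₀ ℕ) → ℝ} (h : SFeas a b r μ ν z) : LocPSDMonomials z r :=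
  locPSDMonomials_of_prod_X h.2.1

section Tensor

variable {σ₁ σ₂ : Type*} (z₁ : (σ₁ →₀ ℕ) → ℝ) (z₂ : (σ₂ →₀ ℕ) → ℝ)

/-- The tensor product `L_{z₁} ⊗ L_{z₂}` of two Riesz functionals, on `ℝ[σ₁][σ₂]`. -/
noncomputable def rieszTensor (F : MvPolynomial σ₁ (MvPolynomial σ₂ ℝ)) : ℝ :=
  ∑ a ∈ F.support, z₁ a * riesz z₂ (F.coeff a)

variable {z₁ z₂} in
theorem rieszTensor_eq_sum_of_support_subset {F : MvPolynomial σ₁ (MvPolynomial σ₂ ℝ)}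
    {S : Finset (σ₁ →₀ ℕ)} (h : F.support ⊆ S) :
    rieszTensor z₁ z₂ F = ∑ a ∈ S, z₁ a * riesz z₂ (F.coeff a) :=
  Finset.sum_subset h fun _ _ hx => by simp [notMem_support_iff.mp hx, riesz]

theorem rieszTensor_add (F G : MvPolynomial σ₁ (MvPolynomial σ₂ ℝ)) :
    rieszTensor z₁ z₂ (F + G) = rieszTensor z₁ z₂ F + rieszTensor z₁ z₂ G := by
  classical
  rw [rieszTensor_eq_sum_of_support_subset support_add,
    rieszTensor_eq_sum_of_support_subset Finset.subset_union_left,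
    rieszTensor_eq_sum_of_support_subset Finset.subset_union_right, ← Finset.sum_add_distrib]
  exact Finset.sum_congr rfl fun _ _ => by rw [coeff_add, riesz_add, mul_add]

theorem rieszTensor_smul (c : ℝ) (F : MvPolynomial σ₁ (MvPolynomial σ₂ ℝ)) :
    rieszTensor z₁ z₂ (c • F) = c • rieszTensor z₁ z₂ F := by
  rw [rieszTensor_eq_sum_of_support_subset support_smul, rieszTensor, Finset.smul_sum]
  exact Finset.sum_congr rfl fun _ _ => by
    simp only [coeff_smul, riesz_smul, smul_eq_mul, mul_left_comm]

noncomputable def rieszTensorLinear :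
    MvPolynomial σ₁ (MvPolynomial σ₂ ℝ) →ₗ[ℝ] ℝ where
  toFun := rieszTensor z₁ z₂
  map_add' := rieszTensor_add z₁ z₂
  map_smul' := rieszTensor_smul z₁ z₂

theorem rieszTensor_sum {ι : Type*} (s : Finset ι)
    (f : ι → MvPolynomial σ₁ (MvPolynomial σ₂ ℝ)) :
    rieszTensor z₁ z₂ (∑ i ∈ s, f i) = ∑ i ∈ s, rieszTensor z₁ z₂ (f i) :=
  map_sum (rieszTensorLinear z₁ z₂) f s

theorem rieszTensor_monomial (a : σ₁ →₀ ℕ) (g : MvPolynomial σ₂ ℝ) :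
    rieszTensor z₁ z₂ (monomial a g) = z₁ a * riesz z₂ g := by
  classical
  rw [rieszTensor_eq_sum_of_support_subset support_monomial_subset, Finset.sum_singleton,
    coeff_monomial, if_pos rfl]

theorem rieszTensor_monomial_mul (a : σ₁ →₀ ℕ) (g : MvPolynomial σ₂ ℝ)
    (F : MvPolynomial σ₁ (MvPolynomial σ₂ ℝ)) :
    rieszTensor z₁ z₂ (monomial a g * F) =
      ∑ b ∈ F.support, z₁ (a + b) * riesz z₂ (g * F.coeff b) := by
  conv_lhs => rw [as_sum F]
  rw [Finset.mul_sum, rieszTensor_sum]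
  exact Finset.sum_congr rfl fun _ _ => by rw [monomial_mul, rieszTensor_monomial]

theorem rieszTensor_monomial_mul_mul_self (a : σ₁ →₀ ℕ) (g : MvPolynomial σ₂ ℝ)
    (F : MvPolynomial σ₁ (MvPolynomial σ₂ ℝ)) :
    rieszTensor z₁ z₂ (monomial a g * (F * F)) =
      ∑ b ∈ F.support, ∑ c ∈ F.support,
        z₁ (a + b + c) * riesz z₂ (g * (F.coeff b * F.coeff c)) := by
  conv_lhs => rw [as_sum F]
  rw [Finset.sum_mul_sum, Finset.mul_sum, rieszTensor_sum]
  refine Finset.sum_congr rfl fun b _ => ?_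
  rw [Finset.mul_sum, rieszTensor_sum]
  exact Finset.sum_congr rfl fun c _ => by
    rw [monomial_mul, monomial_mul, rieszTensor_monomial, add_assoc]

theorem rieszTensor_map_C_mul (G : MvPolynomial σ₁ ℝ)
    (F : MvPolynomial σ₁ (MvPolynomial σ₂ ℝ)) :
    rieszTensor z₁ z₂ (map C G * F) =
      ∑ b ∈ F.support, riesz z₂ (F.coeff b) * riesz z₁ (G * monomial b 1) := by
  conv_lhs => rw [as_sum G]
  simp only [map_sum, map_monomial, Finset.sum_mul, rieszTensor_sum, rieszTensor_monomial_mul,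
    riesz_C_mul, riesz_mul_monomial, Finset.mul_sum]
  rw [Finset.sum_comm]
  exact Finset.sum_congr rfl fun _ _ => Finset.sum_congr rfl fun _ _ => by ring

theorem C_mul_X_mul_X_eq_monomial (c : ℝ) (u : σ₂) (v : σ₁) :
    (C (C c * X u) * X v : MvPolynomial σ₁ (MvPolynomial σ₂ ℝ)) =
      monomial (Finsupp.single v 1) (monomial (Finsupp.single u 1) c) := by
  rw [X, X, C_mul_monomial, mul_one, C_mul_monomial, mul_one]

theorem monomial_monomial_eq_smul (a : σ₁ →₀ ℕ) (b : σ₂ →₀ ℕ) (c : ℝ) :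
    monomial a (monomial b c) = c • monomial a (monomial b 1) := by
  rw [smul_monomial, smul_monomial, smul_eq_mul, mul_one]

end Tensor

section Bidegree

variable {σ₁ σ₂ : Type*}

def BidegLE (d₁ d₂ : ℕ) (F : MvPolynomial σ₁ (MvPolynomial σ₂ ℝ)) : Prop :=
  F.totalDegree ≤ d₁ ∧ ∀ a, (F.coeff a).totalDegree ≤ d₂

theorem BidegLE.mono {d₁ d₂ e₁ e₂ : ℕ} {F : MvPolynomial σ₁ (MvPolynomial σ₂ ℝ)}
    (h : BidegLE d₁ d₂ F) (h₁ : d₁ ≤ e₁) (h₂ : d₂ ≤ e₂) : BidegLE e₁ e₂ F :=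
  ⟨h.1.trans h₁, fun a => (h.2 a).trans h₂⟩

theorem BidegLE.mul {d₁ d₂ e₁ e₂ : ℕ} {F G : MvPolynomial σ₁ (MvPolynomial σ₂ ℝ)}
    (hF : BidegLE d₁ d₂ F) (hG : BidegLE e₁ e₂ G) : BidegLE (d₁ + e₁) (d₂ + e₂) (F * G) := by
  classical
  refine ⟨(totalDegree_mul _ _).trans (add_le_add hF.1 hG.1), fun a => ?_⟩
  rw [coeff_mul]
  exact totalDegree_finsetSum_le fun _ _ =>
    (totalDegree_mul _ _).trans (add_le_add (hF.2 _) (hG.2 _))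

theorem bidegLE_sum {ι : Type*} {d₁ d₂ : ℕ} {s : Finset ι}
    {f : ι → MvPolynomial σ₁ (MvPolynomial σ₂ ℝ)} (h : ∀ i ∈ s, BidegLE d₁ d₂ (f i)) :
    BidegLE d₁ d₂ (∑ i ∈ s, f i) := by
  refine ⟨totalDegree_finsetSum_le fun i hi => (h i hi).1, fun a => ?_⟩
  rw [coeff_sum]
  exact totalDegree_finsetSum_le fun i hi => (h i hi).2 a

theorem bidegLE_C (g : MvPolynomial σ₂ ℝ) :
    BidegLE 0 g.totalDegree (C g : MvPolynomial σ₁ (MvPolynomial σ₂ ℝ)) := by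
  classical
  refine ⟨(totalDegree_C g).le, fun a => ?_⟩
  rw [coeff_C]
  split_ifs <;> simp

theorem bidegLE_X (v : σ₁) : BidegLE 1 0 (X v : MvPolynomial σ₁ (MvPolynomial σ₂ ℝ)) := by
  classical
  refine ⟨(totalDegree_X v).le, fun a => ?_⟩
  rw [X, coeff_monomial]
  split_ifs <;> simp

theorem bidegLE_prod {ι : Type*} (s : Finset ι) {d₁ d₂ : ι → ℕ}
    {f : ι → MvPolynomial σ₁ (MvPolynomial σ₂ ℝ)} (h : ∀ i ∈ s, BidegLE (d₁ i) (d₂ i) (f i)) :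
    BidegLE (∑ i ∈ s, d₁ i) (∑ i ∈ s, d₂ i) (∏ i ∈ s, f i) := by
  classical
  induction s using Finset.induction_on with
  | empty => simpa using bidegLE_C (σ₁ := σ₁) (1 : MvPolynomial σ₂ ℝ)
  | insert i s hi ih =>
    rw [Finset.prod_insert hi, Finset.sum_insert hi, Finset.sum_insert hi]
    exact (h i (Finset.mem_insert_self i s)).mul
      (ih fun x hx => h x (Finset.mem_insert_of_mem hx))

theorem bidegLE_aeval {τ : Type*} {g : τ → MvPolynomial σ₁ (MvPolynomial σ₂ ℝ)}
    (hg : ∀ v, BidegLE 1 1 (g v)) (P : MvPolynomial τ ℝ) :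
    BidegLE P.totalDegree P.totalDegree (aeval g P) := by
  rw [show aeval g P = ∑ η ∈ P.support, aeval g (monomial η (coeff η P)) by
    rw [← map_sum, ← as_sum]]
  refine bidegLE_sum fun η hη => ?_
  have hpow : ∀ v, BidegLE (η v) (η v) (g v ^ η v) := fun v => by
    simpa using bidegLE_prod (Finset.range (η v)) fun _ _ => hg v
  rw [aeval_monomial, MvPolynomial.algebraMap_apply, algebraMap_eq, Finsupp.prod]
  have hc : BidegLE 0 0 (C (C (coeff η P)) : MvPolynomial σ₁ (MvPolynomial σ₂ ℝ)) := by
    simpa using bidegLE_C (σ₁ := σ₁) (C (coeff η P))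
  have hdeg : 0 + ∑ v ∈ η.support, η v ≤ P.totalDegree := (zero_add _).trans_le (le_totalDegree hη)
  exact (hc.mul (bidegLE_prod η.support fun v _ => hpow v)).mono hdeg hdeg

theorem bidegLE_C_mul_X (c : ℝ) (u : σ₂) :
    BidegLE 0 1 (C (C c * X u) : MvPolynomial σ₁ (MvPolynomial σ₂ ℝ)) :=
  (bidegLE_C _).mono le_rfl ((totalDegree_mul _ _).trans (by simp))

theorem bidegLE_C_mul_X_mul_X (c : ℝ) (u v : σ₂) :
    BidegLE 0 2 (C (C c * (X u * X v)) : MvPolynomial σ₁ (MvPolynomial σ₂ ℝ)) :=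
  (bidegLE_C _).mono le_rfl ((totalDegree_mul _ _).trans
    (by simpa using totalDegree_mul (X u : MvPolynomial σ₂ ℝ) (X v)))

end Bidegree

section TensorLocalizing

variable {σ₁ σ₂ : Type*} (z₁ : (σ₁ →₀ ℕ) → ℝ) (z₂ : (σ₂ →₀ ℕ) → ℝ)

def TensorNull (d₁ d₂ : ℕ) (G : MvPolynomial σ₁ (MvPolynomial σ₂ ℝ)) : Prop :=
  ∀ F, BidegLE d₁ d₂ F → rieszTensor z₁ z₂ (G * F) = 0

variable {z₁ z₂} {d₁ d₂ : ℕ}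

/-- The Gram matrices of `z₁` and `z₂` are positive semidefinite, hence so is their entrywise
product (Schur). -/
theorem rieszTensor_monomial_mul_self_nonneg {η₁ : σ₁ →₀ ℕ} {η₂ : σ₂ →₀ ℕ}
    (h₁ : locPSD z₁ (monomial η₁ 1) d₁) (h₂ : locPSD z₂ (monomial η₂ 1) d₂)
    {F : MvPolynomial σ₁ (MvPolynomial σ₂ ℝ)} (hF : BidegLE d₁ d₂ F) :
    0 ≤ rieszTensor z₁ z₂ (monomial η₁ (monomial η₂ 1) * (F * F)) := by
  have hA := h₁.posSemidef_gram (fun b : F.support => monomial (b : σ₁ →₀ ℕ) 1)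
    fun b => (totalDegree_monomial_le_mdeg _ _).trans ((le_totalDegree b.2).trans hF.1)
  have hB := h₂.posSemidef_gram (fun b : F.support => F.coeff b) fun b => hF.2 b
  have hAB := (hA.hadamard hB).dotProduct_mulVec_nonneg 1
  simp only [star_one, Matrix.mulVec, dotProduct, Pi.one_apply, one_mul, mul_one,
    Matrix.hadamard, Matrix.of_apply, monomial_mul, riesz_monomial, ← add_assoc] at hAB
  rw [rieszTensor_monomial_mul_mul_self, ← Finset.sum_coe_sort F.support]
  exact hAB.trans_eq (Finset.sum_congr rfl fun b _ =>
    Finset.sum_coe_sort F.support fun c => z₁ (η₁ + b + c) * riesz z₂ (_ * (_ * F.coeff c)))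

theorem TensorNull.add {G H : MvPolynomial σ₁ (MvPolynomial σ₂ ℝ)}
    (hG : TensorNull z₁ z₂ d₁ d₂ G) (hH : TensorNull z₁ z₂ d₁ d₂ H) :
    TensorNull z₁ z₂ d₁ d₂ (G + H) := fun F hF => by
  rw [add_mul, rieszTensor_add, hG F hF, hH F hF, add_zero]

theorem TensorNull.sum {ι : Type*} {s : Finset ι} {G : ι → MvPolynomial σ₁ (MvPolynomial σ₂ ℝ)}
    (h : ∀ i ∈ s, TensorNull z₁ z₂ d₁ d₂ (G i)) : TensorNull z₁ z₂ d₁ d₂ (∑ i ∈ s, G i) :=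
  fun F hF => by
    rw [Finset.sum_mul, rieszTensor_sum]
    exact Finset.sum_eq_zero fun i hi => h i hi F hF

theorem TensorNull.mul {G H : MvPolynomial σ₁ (MvPolynomial σ₂ ℝ)} {a b e₁ e₂ : ℕ}
    (hG : TensorNull z₁ z₂ d₁ d₂ G) (hH : BidegLE a b H) (h₁ : a + e₁ ≤ d₁) (h₂ : b + e₂ ≤ d₂) :
    TensorNull z₁ z₂ e₁ e₂ (G * H) := fun F hF => by
  rw [mul_assoc]
  exact hG _ ((hH.mul hF).mono h₁ h₂)

theorem locZero.tensorNull_map_C {g : MvPolynomial σ₁ ℝ} {t : ℕ} (h : locZero z₁ g t) :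
    TensorNull z₁ z₂ (2 * t) d₂ (map C g) := fun F hF => by
  rw [rieszTensor_map_C_mul]
  exact Finset.sum_eq_zero fun b hb => by
    rw [h.riesz_mul_monomial_eq_zero ((le_totalDegree hb).trans hF.1), mul_zero]

theorem locZero.tensorNull_C {g : MvPolynomial σ₂ ℝ} {t : ℕ} (h : locZero z₂ g t) :
    TensorNull z₁ z₂ d₁ (2 * t) (C g) := fun F hF => by
  rw [← monomial_zero', rieszTensor_monomial_mul]
  exact Finset.sum_eq_zero fun b _ => by rw [h.riesz_mul_eq_zero (hF.2 b), mul_zero]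

end TensorLocalizing

section Glue

variable {m n q : ℕ} (β : Fin n → ℝ)

noncomputable def glueVar (i : Fin m) (k : Fin q) :
    MvPolynomial (Fin m × Fin n) (MvPolynomial (Fin n × Fin q) ℝ) :=
  ∑ j, C (C (β j)⁻¹ * X (j, k)) * X (i, j)

noncomputable def glueHom :
    MvPolynomial (Fin m × Fin q) ℝ →ₐ[ℝ]
      MvPolynomial (Fin m × Fin n) (MvPolynomial (Fin n × Fin q) ℝ) :=
  aeval fun ik => glueVar β ik.1 ik.2

noncomputable def glue (z₁ : ((Fin m × Fin n) →₀ ℕ) → ℝ) (z₂ : ((Fin n × Fin q) →₀ ℕ) → ℝ)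
    (η : (Fin m × Fin q) →₀ ℕ) : ℝ :=
  rieszTensor z₁ z₂ (glueHom β (monomial η 1))

theorem glueHom_X (i : Fin m) (k : Fin q) : glueHom β (X (i, k)) = glueVar β i k :=
  aeval_X _ _

theorem glueHom_C (c : ℝ) : glueHom (m := m) (q := q) β (C c) = C (C c) := by
  rw [glueHom, aeval_C, MvPolynomial.algebraMap_apply, algebraMap_eq]

theorem bidegLE_glueHom (P : MvPolynomial (Fin m × Fin q) ℝ) :
    BidegLE P.totalDegree P.totalDegree (glueHom β P) :=
  bidegLE_aeval (fun _ => bidegLE_sum fun _ _ => by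
    simpa using (bidegLE_C_mul_X _ _).mul (bidegLE_X _)) P

theorem riesz_glue (z₁ : ((Fin m × Fin n) →₀ ℕ) → ℝ) (z₂ : ((Fin n × Fin q) →₀ ℕ) → ℝ)
    (P : MvPolynomial (Fin m × Fin q) ℝ) :
    riesz (glue β z₁ z₂) P = rieszTensor z₁ z₂ (glueHom β P) := by
  induction P using MvPolynomial.induction_on' with
  | monomial η c =>
    rw [riesz_monomial, show monomial η c = c • monomial η (1 : ℝ) by
      rw [smul_monomial, smul_eq_mul, mul_one], map_smul, rieszTensor_smul, smul_eq_mul, glue]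
  | add P Q hP hQ => rw [riesz_add, map_add, rieszTensor_add, hP, hQ]

theorem glueHom_rowPoly (hβ : ∀ j, β j ≠ 0) (α : Fin m → ℝ) (i : Fin m) :
    glueHom β (rowPoly m q α i) =
      ∑ j, C (C (β j)⁻¹ * rowPoly n q β j) * X (i, j) + map C (rowPoly m n α i) := by
  have hinv : ∀ j, (C (C (β j)⁻¹ * C (β j)) :
      MvPolynomial (Fin m × Fin n) (MvPolynomial (Fin n × Fin q) ℝ)) = 1 := fun j => by
    rw [← C_mul, inv_mul_cancel₀ (hβ j), C_1, C_1]
  simp only [rowPoly, map_sub, map_sum, glueHom_X, glueHom_C, glueVar, map_X, map_C, mul_sub,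
    Finset.mul_sum, sub_mul, Finset.sum_mul, Finset.sum_sub_distrib, hinv, one_mul]
  rw [Finset.sum_comm]
  abel

theorem glueHom_colPoly (hβ : ∀ j, β j ≠ 0) (γ : Fin q → ℝ) (k : Fin q) :
    glueHom β (colPoly m q γ k) =
      ∑ j, C (C (β j)⁻¹ * X (j, k)) * map C (colPoly m n β j) + C (colPoly n q γ k) := by
  have hinv : ∀ j, (C (C (β j)⁻¹ * X (j, k)) * C (C (β j)) :
      MvPolynomial (Fin m × Fin n) (MvPolynomial (Fin n × Fin q) ℝ)) = C (X (j, k)) := fun j => by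
    rw [← C_mul, mul_right_comm, ← C_mul, inv_mul_cancel₀ (hβ j), C_1, one_mul]
  simp only [colPoly, map_sub, map_sum, glueHom_X, glueHom_C, glueVar, map_X, map_C, mul_sub,
    Finset.mul_sum, Finset.sum_sub_distrib, hinv]
  rw [Finset.sum_comm]
  abel

end Glue

section GlueFeasible

variable {m n q r : ℕ} {α : Fin m → ℝ} {β : Fin n → ℝ} {γ : Fin q → ℝ}
  {z₁ : ((Fin m × Fin n) →₀ ℕ) → ℝ} {z₂ : ((Fin n × Fin q) →₀ ℕ) → ℝ}

theorem glue_zero (h₁ : z₁ 0 = 1) (h₂ : z₂ 0 = 1) : glue β z₁ z₂ 0 = 1 := by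
  rw [glue, monomial_zero', C_1, map_one, ← C_1, ← monomial_zero', rieszTensor_monomial,
    ← C_1, riesz_C, h₁, h₂, one_mul, one_mul]

theorem locZero_glue_of_tensorNull {g : MvPolynomial (Fin m × Fin q) ℝ} {t : ℕ}
    (h : TensorNull z₁ z₂ (2 * t) (2 * t) (glueHom β g)) : locZero (glue β z₁ z₂) g t := by
  intro a b ha hb
  have hdeg : ∀ c : (Fin m × Fin q) →₀ ℕ, mdeg c ≤ t → BidegLE t t (glueHom β (monomial c 1)) :=
    fun c hc => (bidegLE_glueHom β _).mono ((totalDegree_monomial_le_mdeg c 1).trans hc)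
      ((totalDegree_monomial_le_mdeg c 1).trans hc)
  rw [riesz_glue, map_mul, map_mul, mul_assoc]
  exact h _ (((hdeg a ha).mul (hdeg b hb)).mono (two_mul t).ge (two_mul t).ge)

variable (hβ : ∀ j, β j ≠ 0) (h₁ : SFeas m n r α β z₁) (h₂ : SFeas n q r β γ z₂)
include hβ h₁ h₂

theorem locZero_glue_rowPoly (i : Fin m) : locZero (glue β z₁ z₂) (rowPoly m q α i) (r - 1) := by
  obtain ⟨-, -, hrow₁, -, -, -⟩ := h₁
  obtain ⟨-, -, hrow₂, -, -, -⟩ := h₂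
  refine locZero_glue_of_tensorNull ?_
  rw [glueHom_rowPoly β hβ]
  exact .add (.sum fun j _ => ((hrow₂ j).C_mul _).tensorNull_C.mul (bidegLE_X _) le_rfl
    (by omega)) (hrow₁ i).tensorNull_map_C

theorem locZero_glue_colPoly (k : Fin q) : locZero (glue β z₁ z₂) (colPoly m q γ k) (r - 1) := by
  obtain ⟨-, -, -, hcol₁, -, -⟩ := h₁
  obtain ⟨-, -, -, hcol₂, -, -⟩ := h₂
  refine locZero_glue_of_tensorNull ?_
  rw [glueHom_colPoly β hβ]
  refine .add (.sum fun j _ => ?_) (hcol₂ k).tensorNull_C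
  rw [mul_comm (C _)]
  exact (hcol₁ j).tensorNull_map_C.mul (bidegLE_C_mul_X _ _) (by omega) le_rfl

theorem locZero_glue_rowPoly_mul_X (i₁ i₂ : Fin m) (k : Fin q) :
    locZero (glue β z₁ z₂) (rowPoly m q α i₁ * X (i₂, k)) (r - 1) := by
  obtain ⟨-, -, -, -, hrowX₁, -⟩ := h₁
  obtain ⟨-, -, -, -, hrowX₂, -⟩ := h₂
  refine locZero_glue_of_tensorNull ?_
  rw [map_mul, glueHom_rowPoly β hβ, glueHom_X, glueVar, add_mul, Finset.sum_mul_sum,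
    Finset.mul_sum]
  refine .add (.sum fun j _ => .sum fun j₂ _ => ?_) (.sum fun j₂ _ => ?_)
  · rw [show C (C (β j)⁻¹ * rowPoly n q β j) * X (i₁, j) * (C (C (β j₂)⁻¹ * X (j₂, k)) * X (i₂, j₂))
        = C (C ((β j)⁻¹ * (β j₂)⁻¹) * (rowPoly n q β j * X (j₂, k))) * (X (i₁, j) * X (i₂, j₂))
        by simp only [map_mul]; ring]
    exact ((hrowX₂ j j₂ k).C_mul _).tensorNull_C.mul ((bidegLE_X _).mul (bidegLE_X _)) le_rfl
      (by omega)
  · rw [show map C (rowPoly m n α i₁) * (C (C (β j₂)⁻¹ * X (j₂, k)) * X (i₂, j₂))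
        = map C (rowPoly m n α i₁ * X (i₂, j₂)) * C (C (β j₂)⁻¹ * X (j₂, k))
        by simp only [map_mul, map_X]; ring]
    exact (hrowX₁ i₁ i₂ j₂).tensorNull_map_C.mul (bidegLE_C_mul_X _ _) (by omega) le_rfl

theorem locZero_glue_colPoly_mul_X (k₁ k₂ : Fin q) (i : Fin m) :
    locZero (glue β z₁ z₂) (colPoly m q γ k₁ * X (i, k₂)) (r - 1) := by
  obtain ⟨-, -, -, -, -, hcolX₁⟩ := h₁
  obtain ⟨-, -, -, -, -, hcolX₂⟩ := h₂
  refine locZero_glue_of_tensorNull ?_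
  rw [map_mul, glueHom_colPoly β hβ, glueHom_X, glueVar, add_mul, Finset.sum_mul_sum,
    Finset.mul_sum]
  refine .add (.sum fun j _ => .sum fun j₂ _ => ?_) (.sum fun j₂ _ => ?_)
  · rw [show C (C (β j)⁻¹ * X (j, k₁)) * map C (colPoly m n β j) *
          (C (C (β j₂)⁻¹ * X (j₂, k₂)) * X (i, j₂))
        = map C (colPoly m n β j * X (i, j₂)) *
          C (C ((β j)⁻¹ * (β j₂)⁻¹) * (X (j, k₁) * X (j₂, k₂)))
        by simp only [map_mul, map_X]; ring]
    exact (hcolX₁ j j₂ i).tensorNull_map_C.mul (bidegLE_C_mul_X_mul_X _ _ _) (by omega)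
      le_rfl
  · rw [show C (colPoly n q γ k₁) * (C (C (β j₂)⁻¹ * X (j₂, k₂)) * X (i, j₂))
        = C (C (β j₂)⁻¹ * (colPoly n q γ k₁ * X (j₂, k₂))) * X (i, j₂)
        by simp only [map_mul]; ring]
    exact ((hcolX₂ k₁ k₂ j₂).C_mul _).tensorNull_C.mul (bidegLE_X _) le_rfl (by omega)

end GlueFeasible

section GluePSD

variable {m n q r : ℕ}

theorem glueHom_eI (β : Fin n → ℝ) (I : Finset (Fin m × Fin q)) :
    glueHom β (eI I) = ∑ J : I → Fin n,
      monomial (∑ x : I, Finsupp.single (x.1.1, J x) 1)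
        (monomial (∑ x : I, Finsupp.single (J x, x.1.2) 1) (∏ x, (β (J x))⁻¹)) := by
  rw [eI, map_prod, ← Finset.prod_coe_sort I]
  simp only [glueHom, aeval_X, glueVar, C_mul_X_mul_X_eq_monomial]
  rw [Finset.prod_univ_sum, Fintype.piFinset_univ]
  simp only [← monomial_sum_prod]

theorem locPSD_glue_eI {β : Fin n → ℝ} {z₁ : ((Fin m × Fin n) →₀ ℕ) → ℝ}
    {z₂ : ((Fin n × Fin q) →₀ ℕ) → ℝ} (hβ : ∀ j, 0 < β j) (h₁ : LocPSDMonomials z₁ r)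
    (h₂ : LocPSDMonomials z₂ r) {I : Finset (Fin m × Fin q)} (hI : I.card ≤ 2 * r) :
    locPSD (glue β z₁ z₂) (eI I) (r - (I.card + 1) / 2) := by
  intro P hP
  rw [sq, riesz_glue, map_mul, map_mul, glueHom_eI, Finset.sum_mul, rieszTensor_sum]
  refine Finset.sum_nonneg fun J _ => ?_
  rw [monomial_monomial_eq_smul, smul_mul_assoc, rieszTensor_smul, smul_eq_mul]
  exact mul_nonneg (Finset.prod_nonneg fun x _ => (inv_pos.2 (hβ _)).le)
    (rieszTensor_monomial_mul_self_nonneg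
      (h₁ _ _ (by rw [mdeg_sum_single_one, Finset.card_univ, Fintype.card_coe]; omega))
      (h₂ _ _ (by rw [mdeg_sum_single_one, Finset.card_univ, Fintype.card_coe]; omega))
      ((bidegLE_glueHom β P).mono hP hP))

end GluePSD

theorem SFeas.glue {m n q r : ℕ} {α : Fin m → ℝ} {β : Fin n → ℝ} {γ : Fin q → ℝ}
    {z₁ : ((Fin m × Fin n) →₀ ℕ) → ℝ} {z₂ : ((Fin n × Fin q) →₀ ℕ) → ℝ}
    (hβ : ∀ j, 0 < β j) (h₁ : SFeas m n r α β z₁) (h₂ : SFeas n q r β γ z₂) :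
    SFeas m q r α γ (glue β z₁ z₂) := by
  have hβ₀ : ∀ j, β j ≠ 0 := fun j => (hβ j).ne'
  exact ⟨glue_zero h₁.1 h₂.1,
    fun _ hI => locPSD_glue_eI hβ h₁.locPSDMonomials h₂.locPSDMonomials hI,
    locZero_glue_rowPoly hβ₀ h₁ h₂, locZero_glue_colPoly hβ₀ h₁ h₂,
    locZero_glue_rowPoly_mul_X hβ₀ h₁ h₂, locZero_glue_colPoly_mul_X hβ₀ h₁ h₂⟩

section Moments

variable {a b r : ℕ} {μ : Fin a → ℝ} {ν : Fin b → ℝ} {z : ((Fin a × Fin b) →₀ ℕ) → ℝ}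

theorem objS_nonneg (h : SFeas a b r μ ν z) (hr : 1 ≤ r)
    {L : Fin a → Fin b → Fin a → Fin b → ℝ} (hL : ∀ i j k l, 0 ≤ L i j k l) :
    0 ≤ objS a b L z :=
  Finset.sum_nonneg fun i _ => Finset.sum_nonneg fun j _ => Finset.sum_nonneg fun k _ =>
    Finset.sum_nonneg fun l _ =>
      mul_nonneg (hL i j k l) (h.locPSDMonomials.second_moment_nonneg hr _ _)

theorem SFeas.sum_row_single (h : SFeas a b r μ ν z) (i : Fin a) :
    ∑ j, z (Finsupp.single (i, j) 1) = μ i := by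
  obtain ⟨hz₀, -, hrow, -, -, -⟩ := h
  have := (hrow i).riesz_eq_zero
  rw [rowPoly, riesz_sub, riesz_sum, riesz_C, hz₀] at this
  simp only [riesz_X] at this
  linarith

theorem SFeas.sum_col_single (h : SFeas a b r μ ν z) (j : Fin b) :
    ∑ i, z (Finsupp.single (i, j) 1) = ν j := by
  obtain ⟨hz₀, -, -, hcol, -, -⟩ := h
  have := (hcol j).riesz_eq_zero
  rw [colPoly, riesz_sub, riesz_sum, riesz_C, hz₀] at this
  simp only [riesz_X] at this
  linarith

theorem SFeas.sum_row_single_add (h : SFeas a b r μ ν z) (i : Fin a) (v : Fin a × Fin b) :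
    ∑ j, z (Finsupp.single (i, j) 1 + Finsupp.single v 1) = μ i * z (Finsupp.single v 1) := by
  obtain ⟨-, -, -, -, hrowX, -⟩ := h
  have := (hrowX i v.1 v.2).riesz_eq_zero
  rw [rowPoly, sub_mul, riesz_sub, Finset.sum_mul, riesz_sum, riesz_C_mul] at this
  simp only [riesz_X_mul_X, riesz_X] at this
  linarith

theorem SFeas.sum_col_single_add (h : SFeas a b r μ ν z) (j : Fin b) (v : Fin a × Fin b) :
    ∑ i, z (Finsupp.single (i, j) 1 + Finsupp.single v 1) = ν j * z (Finsupp.single v 1) := by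
  obtain ⟨-, -, -, -, -, hcolX⟩ := h
  have := (hcolX j v.2 v.1).riesz_eq_zero
  rw [colPoly, sub_mul, riesz_sub, Finset.sum_mul, riesz_sum, riesz_C_mul] at this
  simp only [riesz_X_mul_X, riesz_X] at this
  linarith

theorem SFeas.sum_sum_row (h : SFeas a b r μ ν z) (I : Fin a × Fin a) :
    ∑ J : Fin b × Fin b, z (Finsupp.single (I.1, J.1) 1 + Finsupp.single (I.2, J.2) 1) =
      μ I.1 * μ I.2 := by
  rw [Fintype.sum_prod_type]
  simp only [add_comm (Finsupp.single (I.1, _) 1), h.sum_row_single_add, ← Finset.mul_sum,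
    h.sum_row_single]
  ring

theorem SFeas.sum_sum_col (h : SFeas a b r μ ν z) (J : Fin b × Fin b) :
    ∑ I : Fin a × Fin a, z (Finsupp.single (I.1, J.1) 1 + Finsupp.single (I.2, J.2) 1) =
      ν J.1 * ν J.2 := by
  rw [Fintype.sum_prod_type]
  simp only [add_comm (Finsupp.single (_, J.1) 1), h.sum_col_single_add, ← Finset.mul_sum,
    h.sum_col_single]
  ring

end Moments

section GlueObjective

variable {m n q r : ℕ} {α : Fin m → ℝ} {β : Fin n → ℝ} {γ : Fin q → ℝ}
  {z₁ : ((Fin m × Fin n) →₀ ℕ) → ℝ} {z₂ : ((Fin n × Fin q) →₀ ℕ) → ℝ}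

variable (β z₁ z₂) in
noncomputable def glueWeight (I : Fin m × Fin m) (J : Fin n × Fin n) (K : Fin q × Fin q) : ℝ :=
  (β J.1)⁻¹ * (β J.2)⁻¹ * z₁ (Finsupp.single (I.1, J.1) 1 + Finsupp.single (I.2, J.2) 1) *
    z₂ (Finsupp.single (J.1, K.1) 1 + Finsupp.single (J.2, K.2) 1)

theorem glue_single_add_single (I : Fin m × Fin m) (K : Fin q × Fin q) :
    glue β z₁ z₂ (Finsupp.single (I.1, K.1) 1 + Finsupp.single (I.2, K.2) 1) =
      ∑ J, glueWeight β z₁ z₂ I J K := by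
  rw [glue, ← X_mul_X_eq_monomial, map_mul, glueHom_X, glueHom_X, glueVar, glueVar,
    Finset.sum_mul_sum, rieszTensor_sum, Fintype.sum_prod_type]
  refine Finset.sum_congr rfl fun j _ => ?_
  rw [rieszTensor_sum]
  refine Finset.sum_congr rfl fun j' _ => ?_
  rw [C_mul_X_mul_X_eq_monomial, C_mul_X_mul_X_eq_monomial, monomial_mul, monomial_mul,
    rieszTensor_monomial, riesz_monomial, glueWeight]
  ring

theorem sum_glueWeight_right (hβ : ∀ j, β j ≠ 0) (h₂ : SFeas n q r β γ z₂)
    (I : Fin m × Fin m) (J : Fin n × Fin n) :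
    ∑ K, glueWeight β z₁ z₂ I J K =
      z₁ (Finsupp.single (I.1, J.1) 1 + Finsupp.single (I.2, J.2) 1) := by
  simp only [glueWeight, ← Finset.mul_sum, h₂.sum_sum_row]
  field_simp [hβ J.1, hβ J.2]

theorem sum_glueWeight_left (hβ : ∀ j, β j ≠ 0) (h₁ : SFeas m n r α β z₁)
    (J : Fin n × Fin n) (K : Fin q × Fin q) :
    ∑ I, glueWeight β z₁ z₂ I J K =
      z₂ (Finsupp.single (J.1, K.1) 1 + Finsupp.single (J.2, K.2) 1) := by
  simp only [glueWeight, ← Finset.sum_mul, ← Finset.mul_sum, h₁.sum_sum_col]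
  field_simp [hβ J.1, hβ J.2]

theorem objS_eq_sum_pairs {a b : ℕ} (L : Fin a → Fin b → Fin a → Fin b → ℝ)
    (z : ((Fin a × Fin b) →₀ ℕ) → ℝ) :
    objS a b L z = ∑ I : Fin a × Fin a, ∑ J : Fin b × Fin b,
      L I.1 J.1 I.2 J.2 * z (Finsupp.single (I.1, J.1) 1 + Finsupp.single (I.2, J.2) 1) := by
  simp only [objS, Fintype.sum_prod_type]
  exact Finset.sum_congr rfl fun _ _ => Finset.sum_comm

theorem objS_glue_eq_sum_glueWeight (L : Fin m → Fin q → Fin m → Fin q → ℝ) :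
    objS m q L (glue β z₁ z₂) =
      ∑ I, ∑ J, ∑ K, glueWeight β z₁ z₂ I J K * L I.1 K.1 I.2 K.2 := by
  rw [objS_eq_sum_pairs]
  refine Finset.sum_congr rfl fun I _ => ?_
  simp only [glue_single_add_single, mul_comm (L _ _ _ _), Finset.sum_mul]
  exact Finset.sum_comm

theorem objS_eq_sum_glueWeight_left (hβ : ∀ j, β j ≠ 0) (h₂ : SFeas n q r β γ z₂)
    (L : Fin m → Fin n → Fin m → Fin n → ℝ) :
    objS m n L z₁ = ∑ I, ∑ J, ∑ K, glueWeight β z₁ z₂ I J K * L I.1 J.1 I.2 J.2 := by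
  simp only [objS_eq_sum_pairs, ← Finset.sum_mul, sum_glueWeight_right hβ h₂,
    mul_comm (L _ _ _ _)]

theorem objS_eq_sum_glueWeight_right (hβ : ∀ j, β j ≠ 0) (h₁ : SFeas m n r α β z₁)
    (L : Fin n → Fin q → Fin n → Fin q → ℝ) :
    objS n q L z₂ = ∑ I, ∑ J, ∑ K, glueWeight β z₁ z₂ I J K * L J.1 K.1 J.2 K.2 := by
  rw [Finset.sum_comm]
  simp only [Finset.sum_comm (γ := Fin m × Fin m), ← Finset.sum_mul, sum_glueWeight_left hβ h₁,
    objS_eq_sum_pairs, mul_comm (L _ _ _ _)]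

end GlueObjective

theorem sum_prod_prod_type {α β γ M : Type*} [Fintype α] [Fintype β] [Fintype γ]
    [AddCommMonoid M] (f : α × β × γ → M) : ∑ t, f t = ∑ a, ∑ b, ∑ c, f (a, b, c) := by
  simp only [Fintype.sum_prod_type]

theorem objS_glue_rpow_le {m n q r : ℕ} {α : Fin m → ℝ} {β : Fin n → ℝ} {γ : Fin q → ℝ}
    {z₁ : ((Fin m × Fin n) →₀ ℕ) → ℝ} {z₂ : ((Fin n × Fin q) →₀ ℕ) → ℝ}
    (hβ : ∀ j, 0 < β j) (hr : 1 ≤ r) (h₁ : SFeas m n r α β z₁) (h₂ : SFeas n q r β γ z₂)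
    (dX : Fin m → Fin m → ℝ) (dY : Fin n → Fin n → ℝ) (dZ : Fin q → Fin q → ℝ)
    {p : ℝ} (hp : 1 ≤ p) :
    objS m q (distCost m q dX dZ p) (glue β z₁ z₂) ^ (1 / p) ≤
      objS m n (distCost m n dX dY p) z₁ ^ (1 / p) +
        objS n q (distCost n q dY dZ p) z₂ ^ (1 / p) := by
  have hβ₀ : ∀ j, β j ≠ 0 := fun j => (hβ j).ne'
  have hW : ∀ I J K, 0 ≤ glueWeight β z₁ z₂ I J K := fun I J K =>
    mul_nonneg (mul_nonneg (mul_nonneg (inv_pos.2 (hβ _)).le (inv_pos.2 (hβ _)).le)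
      (h₁.locPSDMonomials.second_moment_nonneg hr _ _))
      (h₂.locPSDMonomials.second_moment_nonneg hr _ _)
  have key := rpow_sum_mul_rpow_le_of_le_add Finset.univ hp
    (ι := (Fin m × Fin m) × (Fin n × Fin n) × (Fin q × Fin q))
    (w := fun t => glueWeight β z₁ z₂ t.1 t.2.1 t.2.2)
    (x := fun t => |dX t.1.1 t.1.2 - dY t.2.1.1 t.2.1.2|)
    (y := fun t => |dY t.2.1.1 t.2.1.2 - dZ t.2.2.1 t.2.2.2|)
    (v := fun t => |dX t.1.1 t.1.2 - dZ t.2.2.1 t.2.2.2|)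
    (fun t _ => hW _ _ _) (fun _ _ => abs_nonneg _) (fun _ _ => abs_nonneg _)
    (fun _ _ => abs_nonneg _) (fun _ _ => abs_sub_le _ _ _)
  simp only [sum_prod_prod_type] at key
  rwa [objS_glue_eq_sum_glueWeight, objS_eq_sum_glueWeight_left hβ₀ h₂,
    objS_eq_sum_glueWeight_right hβ₀ h₁]

theorem distCost_nonneg {a b : ℕ} (dX : Fin a → Fin a → ℝ) (dY : Fin b → Fin b → ℝ) (p : ℝ) :
    ∀ i j k l, 0 ≤ distCost a b dX dY p i j k l :=
  fun _ _ _ _ => Real.rpow_nonneg (abs_nonneg _) _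

section Dirac

variable {σ : Type*}

noncomputable def diracMoments (w : σ → ℝ) (η : σ →₀ ℕ) : ℝ :=
  η.prod fun x e => w x ^ e

theorem riesz_diracMoments (w : σ → ℝ) (f : MvPolynomial σ ℝ) :
    riesz (diracMoments w) f = eval w f := by
  induction f using MvPolynomial.induction_on' with
  | monomial η c => rw [riesz_monomial, eval_monomial, diracMoments]
  | add f g hf hg => rw [riesz_add, map_add, hf, hg]

theorem locZero_diracMoments {w : σ → ℝ} {g : MvPolynomial σ ℝ} (hg : eval w g = 0) (t : ℕ) :
    locZero (diracMoments w) g t := fun _ _ _ _ => by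
  rw [riesz_diracMoments, map_mul, map_mul, hg, zero_mul, zero_mul]

end Dirac

theorem sFeas_diracMoments {a b r : ℕ} {μ : Fin a → ℝ} {ν : Fin b → ℝ}
    (hμ : IsProbVec μ) (hν : IsProbVec ν) :
    SFeas a b r μ ν (diracMoments fun x => μ x.1 * ν x.2) := by
  have hrow : ∀ i, eval (fun x : Fin a × Fin b => μ x.1 * ν x.2) (rowPoly a b μ i) = 0 := by
    intro i
    simp [rowPoly, ← Finset.mul_sum, hν.2]
  have hcol : ∀ j, eval (fun x : Fin a × Fin b => μ x.1 * ν x.2) (colPoly a b ν j) = 0 := by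
    intro j
    simp [colPoly, ← Finset.sum_mul, hμ.2]
  refine ⟨Finsupp.prod_zero_index, fun I _ P _ => ?_, fun i => locZero_diracMoments (hrow i) _,
    fun j => locZero_diracMoments (hcol j) _,
    fun i _ _ => locZero_diracMoments (by rw [map_mul, hrow i, zero_mul]) _,
    fun j _ _ => locZero_diracMoments (by rw [map_mul, hcol j, zero_mul]) _⟩
  rw [riesz_diracMoments, map_mul, map_pow, eI, map_prod]
  exact mul_nonneg (Finset.prod_nonneg fun x _ => by
    rw [eval_X]; exact mul_nonneg (hμ.1 _) (hν.1 _)) (sq_nonneg _)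

theorem stmt19_general (m n q r : ℕ) (hr : 0 < r)
    (α : Fin m → ℝ) (β : Fin n → ℝ) (γ : Fin q → ℝ)
    (hα : IsProbVec α) (hβ : IsProbVec β) (hγ : IsProbVec γ)
    (hβpos : ∀ j, 0 < β j)
    (dX : Fin m → Fin m → ℝ) (dY : Fin n → Fin n → ℝ) (dZ : Fin q → Fin q → ℝ)
    (p : ℝ) (hp : 1 ≤ p) :
    deltaPR m q r α γ dX dZ p ≤
      deltaPR m n r α β dX dY p + deltaPR n q r β γ dY dZ p := by
  refine rpow_sInf_le_add (by positivity) ⟨_, _, sFeas_diracMoments hα hβ, rfl⟩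
    ⟨_, _, sFeas_diracMoments hβ hγ, rfl⟩ ?_ ?_ ?_ ?_
  iterate 3 (rintro _ ⟨z, hz, rfl⟩; exact objS_nonneg hz hr (distCost_nonneg _ _ _))
  rintro _ ⟨z₁, h₁, rfl⟩ _ ⟨z₂, h₂, rfl⟩
  exact ⟨_, ⟨_, h₁.glue hβpos h₂, rfl⟩, objS_glue_rpow_le hβpos hr h₁ h₂ dX dY dZ hp⟩

/-- Triangle inequality for the SOS analog of the `L_p` distortion
distance: `Δ_{p,r}(𝕏,ℤ) ≤ Δ_{p,r}(𝕏,𝕐) + Δ_{p,r}(𝕐,ℤ)`. -/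
theorem stmt19 (m n q r : ℕ) (hm : 0 < m) (hn : 0 < n) (hq : 0 < q) (hr : 0 < r)
    (α : Fin m → ℝ) (β : Fin n → ℝ) (γ : Fin q → ℝ)
    (hα : IsProbVec α) (hβ : IsProbVec β) (hγ : IsProbVec γ)
    (hαpos : ∀ i, 0 < α i) (hβpos : ∀ j, 0 < β j) (hγpos : ∀ k, 0 < γ k)
    (dX : Fin m → Fin m → ℝ) (dY : Fin n → Fin n → ℝ) (dZ : Fin q → Fin q → ℝ)
    (hdX : IsFinMetric dX) (hdY : IsFinMetric dY) (hdZ : IsFinMetric dZ)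
    (p : ℝ) (hp : 1 ≤ p) :
    deltaPR m q r α γ dX dZ p ≤
      deltaPR m n r α β dX dY p + deltaPR n q r β γ dY dZ p :=
  stmt19_general m n q r hr α β γ hα hβ hγ hβpos dX dY dZ p hp
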